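/- arXiv:2104.11175 — 2 statements merged into one kernel-verified Lean document; each statement's English description precedes it below -/
import Mathlib

section
/- Let $K$ be a number field, let $f \in K[x]$ be a monic polynomial of degree $d \geq 2$, let $\alpha \in K$, and let $N \geq 0$ be an integer. Let $\mathfrak{p}$ be a nonzero prime ideal of the ring of integers $\mathcal{O}_K$ such that all coefficients of $f$ and the element $\alpha$ have nonnegative $\mathfrak{p}$-adic valuation and the reduction of $f^N - \alpha$ modulo $\mathfrak{p}$ is a separable polynomial over the residue field $\mathcal{O}_K/\mathfrak{p}$. If $\mathfrak{p}$ splits completely in the splitting field $K_N(f,\alpha)$ of $f^N - \alpha$ over $K$ (i.e., every prime of the ring of integers of $K_N(f,\alpha)$ lying above $\mathfrak{p}$ has ramification index $1$ and residue field degree $1$ over $\mathcal{O}_K/\mathfrak{p}$), then $\#(\mathcal{O}_K/\mathfrak{p}) \geq d^N$. -/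
/-!
Choose a prime `Q` of the splitting field `L` above `𝔭`; its inertia degree is one, so
`𝓞_L/Q = 𝓞_K/𝔭`. The monic integral model `g` of `f^N - α` splits over `𝓞_L`, since its roots in
`L` are integral, hence its reduction splits over `𝓞_L/Q = 𝓞_K/𝔭`. Being separable, that reduction
has `deg g = d^N` distinct roots in `𝓞_K/𝔭`.
-/

open Polynomial IsDedekindDomain NumberField

/-- The `N`-th iterate of a polynomial under composition, with `f^0 = X`. -/
noncomputable def polyIter {K : Type*} [CommRing K] (f : Polynomial K) : ℕ → Polynomial K
  | 0 => Polynomial.X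
  | n + 1 => (polyIter f n).comp f

section Iterates

variable {R : Type*} [CommRing R] {f : R[X]}

theorem natDegree_polyIter [IsDomain R] (f : R[X]) (n : ℕ) :
    (polyIter f n).natDegree = f.natDegree ^ n := by
  induction n with
  | zero => simp [polyIter]
  | succ n ih => rw [polyIter, natDegree_comp, ih, pow_succ]

theorem monic_polyIter (hf : f.Monic) (hf0 : f.natDegree ≠ 0) (n : ℕ) :
    (polyIter f n).Monic := by
  induction n with
  | zero => exact monic_X
  | succ n ih => exact ih.comp hf hf0

theorem monic_polyIter_sub_C [IsDomain R] (hf : f.Monic) (hf0 : f.natDegree ≠ 0) (n : ℕ)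
    (a : R) :
    (polyIter f n - C a).Monic :=
  (monic_polyIter hf hf0 n).sub_of_left <| degree_C_le.trans_lt <| by
    rw [← natDegree_pos_iff_degree_pos, natDegree_polyIter]
    exact pow_pos (Nat.pos_of_ne_zero hf0) n

end Iterates

theorem Polynomial.Monic.splits_of_splits_map {R L : Type*} [CommRing R] [IsDomain R]
    [IsIntegrallyClosed R] [Field L] [Algebra R L] [IsFractionRing R L] {p : R[X]}
    (hp : p.Monic) (hs : Splits (p.map (algebraMap R L))) : Splits p :=
  hs.of_splits_map_of_injective (IsFractionRing.injective R L) fun x hx ↦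
    IsIntegrallyClosed.isIntegral_iff.mp
      ⟨p, hp, by rw [← eval_map]; exact (mem_roots'.mp hx).2⟩

theorem Polynomial.Splits.of_splits_map_of_bijective {k K : Type*} [CommRing k] [IsDomain k]
    [CommRing K] [IsDomain K] {i : k →+* K} (hi : Function.Bijective i) {p : k[X]}
    (hs : Splits (p.map i)) : Splits p :=
  hs.of_splits_map_of_injective hi.1 fun x _ ↦ hi.2 x

theorem Polynomial.Separable.natDegree_le_card_of_splits {k : Type*} [Field k] [Finite k]
    {p : k[X]} (hsep : p.Separable) (hs : Splits p) : p.natDegree ≤ Nat.card k := by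
  have := Fintype.ofFinite k
  rw [← card_rootSet_eq_natDegree (K := k) hsep (by simpa using hs), ← Nat.card_eq_fintype_card]
  exact Finite.card_subtype_le _

attribute [local instance] Ideal.Quotient.field in
theorem Polynomial.Monic.natDegree_le_card_quotient_of_inertiaDeg_eq_one {A B L : Type*}
    [CommRing A] [CommRing B] [IsDomain B] [IsIntegrallyClosed B] [Field L] [Algebra B L]
    [IsFractionRing B L] [Algebra A B] [Algebra A L] [IsScalarTower A B L]
    {p : Ideal A} [p.IsMaximal] [Finite (A ⧸ p)] {Q : Ideal B} [Q.IsMaximal] [Q.LiesOver p]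
    (hQ : Ideal.inertiaDeg' p Q = 1) {g : A[X]} (hg : g.Monic)
    (hs : Splits (g.map (algebraMap A L))) (hsep : (g.map (Ideal.Quotient.mk p)).Separable) :
    g.natDegree ≤ Nat.card (A ⧸ p) := by
  have hsB : Splits (g.map (algebraMap A B)) := by
    refine (hg.map _).splits_of_splits_map (L := L) ?_
    rwa [map_map, ← IsScalarTower.algebraMap_eq]
  have hbij : Function.Bijective (algebraMap (A ⧸ p) (B ⧸ Q)) :=
    Algebra.finrank_eq_one_iff_bijective_algebraMap.mp <| by
      rwa [Ideal.inertiaDeg'_algebraMap] at hQ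
  have hsQ : Splits ((g.map (Ideal.Quotient.mk p)).map (algebraMap (A ⧸ p) (B ⧸ Q))) := by
    rw [map_map, ← Ideal.Quotient.algebraMap_eq, ← IsScalarTower.algebraMap_eq,
      IsScalarTower.algebraMap_eq A B (B ⧸ Q), ← map_map]
    exact hsB.map _
  rw [← hg.natDegree_map (Ideal.Quotient.mk p)]
  exact hsep.natDegree_le_card_of_splits (hsQ.of_splits_map_of_bijective hbij)

theorem stmt4_general (K : Type*) [Field K] [NumberField K] (f : Polynomial K) (d : ℕ) (hd : 2 ≤ d)
    (hmonic : f.Monic) (hdeg : f.natDegree = d) (α : K) (N : ℕ)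
    (v : HeightOneSpectrum (𝓞 K))
    (hsep : ∃ g : Polynomial (𝓞 K),
      g.map (algebraMap (𝓞 K) K) = polyIter f N - Polynomial.C α ∧
      (g.map (Ideal.Quotient.mk v.asIdeal)).Separable)
    (hsplit : ∀ Q : Ideal (𝓞 ((polyIter f N - Polynomial.C α).SplittingField)),
      Q.IsPrime → Q ≠ ⊥ →
      Q.comap (algebraMap (𝓞 K) (𝓞 ((polyIter f N - Polynomial.C α).SplittingField)))
        = v.asIdeal →
      Ideal.ramificationIdx'
        v.asIdeal Q = 1 ∧
      Ideal.inertiaDeg'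
        v.asIdeal Q = 1) :
    d ^ N ≤ Nat.card (𝓞 K ⧸ v.asIdeal) := by
  obtain ⟨g, hgP, hgsep⟩ := hsep
  set L := (polyIter f N - C α).SplittingField
  have : NumberField L := NumberField.of_module_finite K L
  have hf0 : f.natDegree ≠ 0 := by omega
  have hg : g.Monic := monic_of_injective (IsFractionRing.injective (𝓞 K) K)
    (hgP ▸ monic_polyIter_sub_C hmonic hf0 N α)
  have hgdeg : g.natDegree = d ^ N := by
    rw [← natDegree_map_eq_of_injective (IsFractionRing.injective (𝓞 K) K), hgP, natDegree_sub_C,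
      natDegree_polyIter, hdeg]
  have hgL : Splits (g.map (algebraMap (𝓞 K) L)) := by
    rw [IsScalarTower.algebraMap_eq (𝓞 K) K L, ← map_map, hgP]
    exact SplittingField.splits _
  have : v.asIdeal.IsMaximal := v.isMaximal
  obtain ⟨Q, hQmax, hQv⟩ :=
    Ideal.exists_maximal_ideal_liesOver_of_isIntegral (S := 𝓞 L) v.asIdeal
  have hinert := (hsplit Q hQmax.isPrime (Ideal.ne_bot_of_liesOver_of_ne_bot v.ne_bot Q)
    (Ideal.over_def Q v.asIdeal).symm).2
  exact hgdeg ▸ hg.natDegree_le_card_quotient_of_inertiaDeg_eq_one hinert hgL hgsep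

theorem stmt4 (K : Type*) [Field K] [NumberField K] (f : Polynomial K) (d : ℕ) (hd : 2 ≤ d)
    (hmonic : f.Monic) (hdeg : f.natDegree = d) (α : K) (N : ℕ)
    (v : HeightOneSpectrum (𝓞 K))
    (hcoeff : ∀ i : ℕ, v.valuation K (f.coeff i) ≤ 1) (hα : v.valuation K α ≤ 1)
    (hsep : ∃ g : Polynomial (𝓞 K),
      g.map (algebraMap (𝓞 K) K) = polyIter f N - Polynomial.C α ∧
      (g.map (Ideal.Quotient.mk v.asIdeal)).Separable)
    (hsplit : ∀ Q : Ideal (𝓞 ((polyIter f N - Polynomial.C α).SplittingField)),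
      Q.IsPrime → Q ≠ ⊥ →
      Q.comap (algebraMap (𝓞 K) (𝓞 ((polyIter f N - Polynomial.C α).SplittingField)))
        = v.asIdeal →
      Ideal.ramificationIdx'
        v.asIdeal Q = 1 ∧
      Ideal.inertiaDeg'
        v.asIdeal Q = 1) :
    d ^ N ≤ Nat.card (𝓞 K ⧸ v.asIdeal) :=
  stmt4_general K f d hd hmonic hdeg α N v hsep hsplit
end

section
/- Let $d \geq 2$ be an integer and let $\mathbb{F}$ be a finite field whose cardinality is coprime to $d$. Then there exists a real constant $C > 0$, depending only on $d$ and $\mathbb{F}$, such that the following holds: for every finite field extension $\mathbb{L}/\mathbb{F}$ and every integer $s \geq 1$, if $\mathbb{L}$ contains an element of multiplicative order equal to $d^s$, then $[\mathbb{L} : \mathbb{F}] \geq C \cdot d^s$. -/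
/-!
If `x ∈ L` has order `d ^ s`, then `d ^ s ∣ q ^ n - 1` where `q = |F|` and `n = [L : F]`.
By lifting the exponent, for each prime `p ∣ d` the valuation `v_p (q ^ n - 1)` exceeds
`v_p n` by at most a constant depending only on `p` and `q`; hence `d ^ s ∣ d ^ c * n`
for a constant `c`, and `[L : F] ≥ d ^ s / d ^ c`.
-/

open Module

namespace Nat

lemma padicValNat_pow_sub_one_le_of_dvd {p q m k : ℕ} [Fact p.Prime] (hq : 1 < q) (hmk : m ∣ k)
    (hk : k ≠ 0) : padicValNat p (q ^ m - 1) ≤ padicValNat p (q ^ k - 1) := by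
  have hqk : q ^ k - 1 ≠ 0 := sub_ne_zero_of_lt (one_lt_pow hk hq)
  exact (padicValNat_dvd_iff_le hqk).mp
    (pow_padicValNat_dvd.trans (pow_sub_one_dvd_pow_sub_one q hmk))

/-- For `p = 2` we pass through `q ^ (2 * n)`, for odd `p` through `(q ^ (p - 1)) ^ n`, so that
the lifting-the-exponent lemma applies. -/
theorem exists_padicValNat_pow_sub_one_le {p q : ℕ} [hp : Fact p.Prime] (hq : 1 < q)
    (hpq : ¬p ∣ q) : ∃ c, ∀ n ≠ 0, padicValNat p (q ^ n - 1) ≤ c + padicValNat p n := by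
  rcases hp.out.eq_two_or_odd' with rfl | hodd
  · refine ⟨padicValNat 2 (q + 1) + padicValNat 2 (q - 1), fun n hn => ?_⟩
    have hle := padicValNat_pow_sub_one_le_of_dvd (p := 2) hq (dvd_mul_left n 2) (by omega)
    have hlte := padicValNat.pow_two_sub_one hq hpq (n := 2 * n) (by omega) (even_two_mul n)
    have h2n : padicValNat 2 (2 * n) = 1 + padicValNat 2 n := by
      rw [padicValNat.mul two_ne_zero hn, padicValNat_self]
    omega
  · have hp2 := hp.out.two_le
    have hfermat : p ∣ q ^ (p - 1) - 1 :=
      (modEq_iff_dvd' (one_le_pow _ _ (by omega))).mp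
        (ModEq.pow_card_sub_one_eq_one hp.out (hp.out.coprime_iff_not_dvd.mpr hpq).symm).symm
    refine ⟨padicValNat p (q ^ (p - 1) - 1), fun n hn => ?_⟩
    have hle := padicValNat_pow_sub_one_le_of_dvd (p := p) hq (dvd_mul_left n (p - 1))
      (mul_ne_zero (by omega) hn)
    have hlte := padicValNat.pow_sub_pow hodd (x := q ^ (p - 1)) (y := 1)
      (one_lt_pow (by omega) hq) (by simpa using hfermat)
      (fun h => hpq (hp.out.dvd_of_dvd_pow h)) hn
    rw [one_pow, ← pow_mul] at hlte
    omega

theorem exists_pow_dvd_pow_mul_of_pow_dvd_pow_sub_one {d q : ℕ} (hq : 1 < q)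
    (hdq : d.Coprime q) : ∃ c, ∀ s n, n ≠ 0 → d ^ s ∣ q ^ n - 1 → d ^ s ∣ d ^ c * n := by
  have hd : d ≠ 0 := by
    rintro rfl
    exact hq.ne' (coprime_zero_left q |>.mp hdq)
  have hbound : ∀ p ∈ d.primeFactors,
      ∃ c, ∀ n ≠ 0, padicValNat p (q ^ n - 1) ≤ c + padicValNat p n := by
    intro p hp
    have hprime := prime_of_mem_primeFactors hp
    have : Fact p.Prime := ⟨hprime⟩
    exact exists_padicValNat_pow_sub_one_le hq
      (hprime.coprime_iff_not_dvd.mp (hdq.coprime_dvd_left (dvd_of_mem_primeFactors hp)))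
  choose! cp hcp using hbound
  refine ⟨d.primeFactors.sup cp, fun s n hn hdvd => ?_⟩
  have hqn : q ^ n - 1 ≠ 0 := sub_ne_zero_of_lt (one_lt_pow hn hq)
  rw [← factorization_le_iff_dvd (pow_ne_zero _ hd) (by positivity)]
  intro p
  have hval := (factorization_le_iff_dvd (pow_ne_zero _ hd) hqn).mpr hdvd p
  simp only [factorization_pow, factorization_mul (pow_ne_zero _ hd) hn,
    Finsupp.smul_apply, Finsupp.add_apply, smul_eq_mul] at hval ⊢
  by_cases hp : p ∈ d.primeFactors
  · have hprime := prime_of_mem_primeFactors hp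
    have hlte := hcp p hp n hn
    rw [← factorization_def _ hprime, ← factorization_def _ hprime] at hlte
    have hcp_le : cp p ≤ d.primeFactors.sup cp * d.factorization p :=
      (Finset.le_sup hp).trans
        (Nat.le_mul_of_pos_right _ (hprime.factorization_pos_of_dvd hd
          (dvd_of_mem_primeFactors hp)))
    omega
  · have : d.factorization p = 0 :=
      Finsupp.notMem_support_iff.mp (by rwa [support_factorization])
    simp [this]

end Nat

theorem FiniteField.orderOf_dvd_card_pow_finrank_sub_one {F L : Type*} [Field F] [Fintype F]
    [Field L] [Algebra F L] [FiniteDimensional F L] {x : L} (hx : x ≠ 0) :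
    orderOf x ∣ Fintype.card F ^ finrank F L - 1 := by
  have : Finite L := Module.finite_of_finite F
  let : Fintype L := Fintype.ofFinite L
  rw [← Module.card_eq_pow_finrank]
  exact orderOf_dvd_of_pow_eq_one (FiniteField.pow_card_sub_one_eq_one x hx)

theorem stmt9 (d : ℕ) (hd : 2 ≤ d) (F : Type*) [Field F] [Fintype F]
    (hcop : Nat.Coprime d (Fintype.card F)) :
    ∃ C : ℝ, 0 < C ∧
      ∀ (L : Type) (_ : Field L) (_ : Algebra F L) (_ : FiniteDimensional F L),
        ∀ s : ℕ, 1 ≤ s → (∃ x : L, orderOf x = d ^ s) →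
          C * (d : ℝ) ^ s ≤ (Module.finrank F L : ℝ) := by
  obtain ⟨c, hc⟩ := Nat.exists_pow_dvd_pow_mul_of_pow_dvd_pow_sub_one Fintype.one_lt_card hcop
  have hd0 : (0 : ℝ) < d := by exact_mod_cast (by omega : 0 < d)
  refine ⟨1 / (d : ℝ) ^ c, by positivity, fun L _ _ _ s _ ⟨x, hx⟩ => ?_⟩
  have hds : d ^ s ≠ 0 := pow_ne_zero s (by omega)
  have hx0 : x ≠ 0 := by
    rintro rfl
    exact hds (by simpa using hx.symm)
  have hdvd := hc s (finrank F L) finrank_pos.ne'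
    (hx ▸ FiniteField.orderOf_dvd_card_pow_finrank_sub_one hx0)
  have hle : d ^ s ≤ d ^ c * finrank F L :=
    Nat.le_of_dvd (Nat.mul_pos (pow_pos (by omega) c) finrank_pos) hdvd
  rw [one_div_mul_eq_div, div_le_iff₀ (by positivity), mul_comm]
  exact_mod_cast hle
end
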